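/- arXiv:2201.05733 — 2 statements merged into one kernel-verified Lean document; each statement's English description precedes it below -/
import Mathlib

section
/- For any n ≥ 4, any k with 4 ≤ k ≤ n, and any i with 2 ≤ i ≤ k-2, the product (r_k r_{k-i} r_{k-1} r_i)^2 equals the identity permutation of {1,...,n}. -/
/-- The prefix-reversal `r_m` on `{1, ..., n}` (encoded as `Fin n`, 0-indexed):
the 1-indexed entry `j` with `j ≤ m` is sent to `m + 1 - j`, and entries `j > m`
are fixed.  If `m > n` it is the identity. -/
def pancakeRev (n m : ℕ) : Equiv.Perm (Fin n) :=
  Function.Involutive.toPerm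
    (fun a => if h : a.val < m ∧ m ≤ n then ⟨m - 1 - a.val, by omega⟩ else a)
    (by
      intro a
      beta_reduce
      by_cases h : a.val < m ∧ m ≤ n
      · rw [dif_pos h]
        have h2 : m - 1 - a.val < m ∧ m ≤ n := by omega
        rw [dif_pos h2]
        apply Fin.ext
        simp
        omega
      · rw [dif_neg h, dif_neg h])

theorem pancakeRev_val (n m : ℕ) (a : Fin n) :
    (pancakeRev n m a : ℕ) = if a.val < m ∧ m ≤ n then m - 1 - a.val else a.val := by
  simp only [pancakeRev, Function.Involutive.toPerm, Equiv.coe_fn_mk]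
  split_ifs <;> rfl

/-- In 1-indexed terms: the product swaps `1` and `k` and reverses the blocks `[2, i]` and
`[i + 1, k - 1]`, so it is an involution. -/
theorem pancakeRev_mul_val {n i k : ℕ} (hi : 0 < i) (hik : i < k) (hkn : k ≤ n) (a : Fin n) :
    ((pancakeRev n k * pancakeRev n (k - i) * pancakeRev n (k - 1) * pancakeRev n i) a : ℕ) =
      if a.val = 0 then k - 1
      else if a.val < i then i - a.val
      else if a.val < k - 1 then k + i - 2 - a.val
      else if a.val = k - 1 then 0
      else a.val := by
  simp only [Equiv.Perm.mul_apply, pancakeRev_val]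
  split_ifs <;> omega

theorem pancake_C8_3_general (n i k : ℕ) (hkn : k ≤ n)
    (hi : 2 ≤ i) (hik : i ≤ k - 2) :
    (pancakeRev n k * pancakeRev n (k - i) * pancakeRev n (k - 1) * pancakeRev n i) ^ 2 =
      1 := by
  ext a
  rw [pow_two, Equiv.Perm.mul_apply, Equiv.Perm.one_apply,
    pancakeRev_mul_val (by omega) (by omega) hkn, pancakeRev_mul_val (by omega) (by omega) hkn]
  split_ifs <;> omega

theorem pancake_C8_3 (n i k : ℕ) (hn : 4 ≤ n) (hk : 4 ≤ k) (hkn : k ≤ n)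
    (hi : 2 ≤ i) (hik : i ≤ k - 2) :
    (pancakeRev n k * pancakeRev n (k - i) * pancakeRev n (k - 1) * pancakeRev n i) ^ 2 =
      1 :=
  pancake_C8_3_general n i k hkn hi hik
end

section
/- For any odd n ≥ 7, every product of 10 prefix-reversals drawn from {r_{n-3}, r_{n-1}, r_n}, with consecutive factors distinct (cyclically), is different from the identity permutation; i.e., the cubic Pancake graph Cay(Sym_n, {r_{n-3}, r_{n-1}, r_n}) contains no cycle of length 10. -/
open Int

def prefixFlip (m a : ℕ) : ℕ := if a < m then m - 1 - a else a

theorem pancakeRev_apply_val {n m : ℕ} (hm : m ≤ n) (x : Fin n) :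
    (pancakeRev n m x : ℕ) = prefixFlip m x := by
  change (if h : (x : ℕ) < m ∧ m ≤ n then (⟨m - 1 - x, by omega⟩ : Fin n) else x).val = _
  unfold prefixFlip
  split_ifs <;> simp_all

theorem prod_map_pancakeRev_apply_val {n : ℕ} {l : List ℕ} (hl : ∀ m ∈ l, m ≤ n) (x : Fin n) :
    ((l.map (pancakeRev n)).prod x : ℕ) = l.foldr prefixFlip x := by
  induction l with
  | nil => rfl
  | cons m l ih =>
    simp only [List.forall_mem_cons] at hl
    rw [List.map_cons, List.prod_cons, Equiv.Perm.mul_apply, pancakeRev_apply_val hl.1,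
      ih hl.2, List.foldr_cons]

theorem prod_map_pancakeRev_ne_one_of_foldr_ne {n a : ℕ} {l : List ℕ} (hl : ∀ m ∈ l, m ≤ n)
    (ha : a < n) (hmoved : l.foldr prefixFlip a ≠ a) : (l.map (pancakeRev n)).prod ≠ 1 := by
  intro hone
  have happly := prod_map_pancakeRev_apply_val hl ⟨a, ha⟩
  rw [hone] at happly
  exact hmoved happly.symm

/-- The label `z` stands for the position `z` if `z ≥ 0` and `n + z` if `z < 0`; this is the
action of `r_{n-k}` on labels with `|z| + k < n`. -/
def topFlip (k : ℕ) (z : ℤ) : ℤ := if 0 ≤ z ∨ z < -k then -(z + k + 1) else z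

theorem prefixFlip_sub_modEq_topFlip {n k x : ℕ} {z : ℤ} (hx : x < n) (hxz : x ≡ z [ZMOD n])
    (hz : |z| + k < n) : prefixFlip (n - k) x ≡ topFlip k z [ZMOD n] := by
  have hzl := neg_abs_le z
  have hzu := le_abs_self z
  have hx' : (x : ℤ) = if 0 ≤ z then z else z + n := by
    have hdvd : (n : ℤ) ∣ z - x := hxz.dvd
    split_ifs
    · linarith [Int.eq_zero_of_abs_lt_dvd hdvd (abs_lt.mpr ⟨by omega, by omega⟩)]
    · have := Int.eq_zero_of_abs_lt_dvd (m := n) (x := z + n - x)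
        (by rw [add_sub_right_comm]; exact dvd_add hdvd dvd_rfl) (abs_lt.mpr ⟨by omega, by omega⟩)
      linarith
  have hcases : (prefixFlip (n - k) x : ℤ) = topFlip k z + n ∨
      (prefixFlip (n - k) x : ℤ) = topFlip k z := by
    unfold prefixFlip topFlip
    split_ifs at hx' ⊢ <;> omega
  rcases hcases with h | h
  · rw [h]
    exact Int.add_modEq_right
  · rw [h]

theorem prod_map_pancakeRev_sub_apply_modEq {n d : ℕ} {ks : List ℕ} {z : ℤ}
    (hks : ∀ k ∈ ks, k ≤ d) (hrun : ∀ w ∈ ks.scanr topFlip z, |w| + d < n) (x : Fin n)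
    (hxz : x ≡ z [ZMOD n]) :
    ((ks.map fun k => pancakeRev n (n - k)).prod x : ℕ) ≡ ks.foldr topFlip z [ZMOD n] := by
  induction ks with
  | nil => exact hxz
  | cons k ks ih =>
    simp only [List.forall_mem_cons, List.scanr_cons] at hks hrun
    rw [List.map_cons, List.prod_cons, Equiv.Perm.mul_apply, pancakeRev_apply_val (Nat.sub_le n k),
      List.foldr_cons]
    have hlast : |ks.foldr topFlip z| + d < n :=
      hrun.2 _ (List.mem_of_mem_head? List.head?_scanr)
    exact prefixFlip_sub_modEq_topFlip (Fin.is_lt _) (ih hks.2 hrun.2) (by omega)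

def IsTopFlipWitness (d N : ℕ) (ks : List ℕ) (z : ℤ) : Prop :=
  (∀ w ∈ ks.scanr topFlip z, |w| + d < N) ∧ ks.foldr topFlip z ≠ z ∧ |ks.foldr topFlip z - z| < N

instance (d N : ℕ) (ks : List ℕ) (z : ℤ) : Decidable (IsTopFlipWitness d N ks z) := by
  unfold IsTopFlipWitness
  infer_instance

theorem prod_map_pancakeRev_sub_ne_one_of_isTopFlipWitness {n d N : ℕ} {ks : List ℕ} {z : ℤ}
    (hks : ∀ k ∈ ks, k ≤ d) (hz : IsTopFlipWitness d N ks z) (hNn : N ≤ n) :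
    (ks.map fun k => pancakeRev n (n - k)).prod ≠ 1 := by
  obtain ⟨hrun, hne, hlt⟩ := hz
  have hn : 0 < n := by
    have := hrun z (List.mem_of_mem_getLast? List.getLast?_scanr)
    have := abs_nonneg z
    omega
  have hmod_nonneg : 0 ≤ z % n := Int.emod_nonneg z (by omega)
  have hmod_lt : z % n < n := Int.emod_lt_of_pos z (by omega)
  let x : Fin n := ⟨(z % n).toNat, by omega⟩
  have hxz : x ≡ z [ZMOD n] := by
    simp only [x, Int.toNat_of_nonneg hmod_nonneg]
    exact Int.mod_modEq z n
  intro hone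
  have hfix := prod_map_pancakeRev_sub_apply_modEq hks
    (fun w hw => (hrun w hw).trans_le (by exact_mod_cast hNn)) x hxz
  rw [hone, Equiv.Perm.one_apply] at hfix
  exact hne (sub_eq_zero.mp (Int.eq_zero_of_abs_lt_dvd (hxz.symm.trans hfix).dvd (by omega)))

def adjDistinctWords {α : Type*} [DecidableEq α] (A : List α) : ℕ → List (List α)
  | 0 => [[]]
  | m + 1 => (adjDistinctWords A m).flatMap fun w =>
      (A.filter fun a => w.head? != some a).map (· :: w)

theorem mem_adjDistinctWords {α : Type*} [DecidableEq α] {A : List α} {m : ℕ} {w : List α} :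
    w ∈ adjDistinctWords A m ↔ w.length = m ∧ (∀ a ∈ w, a ∈ A) ∧ w.IsChain (· ≠ ·) := by
  induction m generalizing w with
  | zero =>
    simp only [adjDistinctWords, List.mem_singleton, List.length_eq_zero_iff]
    constructor
    · rintro rfl
      simp
    · exact fun h => h.1
  | succ m ih =>
    cases w with
    | nil => simp [adjDistinctWords]
    | cons a w =>
      simp only [adjDistinctWords, List.mem_flatMap, List.mem_map, List.mem_filter, ih, bne_iff_ne,
        List.cons.injEq, List.length_cons, List.forall_mem_cons, List.isChain_cons, Option.mem_def]
      grind

theorem ofFn_sub_mem_adjDistinctWords {n m : ℕ} (hn : 3 ≤ n) {f : Fin m → ℕ}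
    (hmem : ∀ j, f j = n - 3 ∨ f j = n - 1 ∨ f j = n)
    (hadj : ∀ i (hi : i + 1 < m), f ⟨i, by omega⟩ ≠ f ⟨i + 1, hi⟩) :
    (List.ofFn fun j => n - f j) ∈ adjDistinctWords [0, 1, 3] m := by
  rw [mem_adjDistinctWords, List.isChain_ofFn]
  refine ⟨List.length_ofFn, ?_, fun i hi => ?_⟩
  · simp only [List.mem_ofFn, List.mem_cons, List.not_mem_nil, or_false]
    rintro _ ⟨j, rfl⟩
    have := hmem j
    omega
  · have := hadj i hi
    have := hmem ⟨i, by omega⟩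
    have := hmem ⟨i + 1, hi⟩
    omega

theorem exists_isTopFlipWitness_of_mem_adjDistinctWords :
    ∀ ks ∈ adjDistinctWords [0, 1, 3] 10,
      ∃ z ∈ [-4, -2, -1, 0, 1, 2, 3], IsTopFlipWitness 3 14 ks z := by
  decide +kernel

theorem exists_foldr_prefixFlip_ne_of_mem_adjDistinctWords :
    ∀ n ∈ List.range' 7 7, ∀ ks ∈ adjDistinctWords [0, 1, 3] 10,
      ∃ a ∈ List.range n, (ks.map (n - ·)).foldr prefixFlip a ≠ a := by
  decide +kernel

theorem ofFn_pancakeRev_eq_map_sub {n m : ℕ} {f : Fin m → ℕ} (hf : ∀ j, f j ≤ n) :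
    (List.ofFn fun j => pancakeRev n (f j)) =
      (List.ofFn fun j => n - f j).map fun k => pancakeRev n (n - k) := by
  rw [List.map_ofFn]
  congr 1
  funext j
  simp only [Function.comp_apply, Nat.sub_sub_self (hf j)]

theorem pancake_no_tenCycles_BS5_general (n : ℕ) (hn : 7 ≤ n)
    (f : Fin 10 → ℕ) (hmem : ∀ j, f j = n - 3 ∨ f j = n - 1 ∨ f j = n)
    (hadj : ∀ j, f j ≠ f (j + 1)) :
    (List.ofFn fun j => pancakeRev n (f j)).prod ≠ 1 := by
  set ks := List.ofFn fun j => n - f j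
  have hks : ks ∈ adjDistinctWords [0, 1, 3] 10 :=
    ofFn_sub_mem_adjDistinctWords (by omega) hmem fun i hi => by
      have hsucc : (⟨i, by omega⟩ + 1 : Fin 10) = ⟨i + 1, hi⟩ := by grind
      exact hsucc ▸ hadj ⟨i, by omega⟩
  have hdepth : ∀ k ∈ ks, k ≤ 3 := fun k hk => by
    have := (mem_adjDistinctWords.mp hks).2.1 k hk
    simp only [List.mem_cons, List.not_mem_nil, or_false] at this
    omega
  rw [ofFn_pancakeRev_eq_map_sub fun j => by have := hmem j; omega]
  rcases lt_or_ge n 14 with hlt | hge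
  · obtain ⟨a, ha, hmoved⟩ := exists_foldr_prefixFlip_ne_of_mem_adjDistinctWords n
      (List.mem_range'_1.mpr ⟨hn, by omega⟩) ks hks
    have := prod_map_pancakeRev_ne_one_of_foldr_ne (by simp) (List.mem_range.mp ha) hmoved
    rwa [List.map_map] at this
  · obtain ⟨z, -, hz⟩ := exists_isTopFlipWitness_of_mem_adjDistinctWords ks hks
    exact prod_map_pancakeRev_sub_ne_one_of_isTopFlipWitness hdepth hz hge

theorem pancake_no_tenCycles_BS5 (n : ℕ) (hodd : Odd n) (hn : 7 ≤ n)
    (f : Fin 10 → ℕ) (hmem : ∀ j, f j = n - 3 ∨ f j = n - 1 ∨ f j = n)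
    (hadj : ∀ j, f j ≠ f (j + 1)) :
    (List.ofFn fun j => pancakeRev n (f j)).prod ≠ 1 :=
  pancake_no_tenCycles_BS5_general n hn f hmem hadj
end
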